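/- Let X be a compact ordered space and let Y ⊆ X be a closed subset, endowed with the subspace topology and the restricted order. Then every continuous monotone function f : Y → [0,1] extends to a continuous monotone function F : X → [0,1], i.e. F z = f z for every z ∈ Y. -/

import Mathlib

/-!
Compactness makes upper and lower closures of closed sets closed, which yields the monotone form
of normality: a closed upper set and a disjoint closed lower set have disjoint open upper and lower
neighbourhoods. Running Mathlib's Urysohn construction `Urysohns.CU` with all outer sets lower then
produces monotone Urysohn functions. Averaging `k` of them, separating `{f ≤ i/k}` from
`{f ≥ (i+1)/k}`, approximates `f` on `Y` within `1/k`. Clamping each new approximation to within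
twice the previous error of the previous one leaves it unchanged on `Y` and gives a uniformly Cauchy
sequence of monotone functions; its limit extends `f`.
-/

open Set Filter Topology

theorem abs_sum_range_sub_le_one {v : ℕ → ℝ} {t : ℝ} (hv : ∀ i, v i ∈ Icc (0 : ℝ) 1)
    (hv_one : ∀ i : ℕ, i + 1 ≤ t → v i = 1) (hv_zero : ∀ i : ℕ, t ≤ i → v i = 0) {k : ℕ}
    (ht₀ : 0 ≤ t) (htk : t ≤ k) : |∑ i ∈ Finset.range k, v i - t| ≤ 1 := by
  induction k with
  | zero => simp [le_antisymm (by simpa using htk) ht₀]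
  | succ k ih =>
    rw [Finset.sum_range_succ]
    by_cases htk' : t ≤ k
    · rw [hv_zero k htk', add_zero]
      exact ih htk'
    · have hsum : ∑ i ∈ Finset.range k, v i = k := by
        rw [Finset.sum_congr rfl fun i hi => hv_one i ?_]
        · simp
        · have : (i : ℝ) + 1 ≤ k := by exact_mod_cast Finset.mem_range.mp hi
          linarith
      obtain ⟨hvk₀, hvk₁⟩ := hv k
      push_cast at htk
      rw [hsum, abs_le]
      constructor <;> linarith

section Pospace

variable {X : Type*} [TopologicalSpace X] [Preorder X] [OrderClosedTopology X]

theorem IsCompact.isClosed_upperClosure {s : Set X} (hs : IsCompact s) :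
    IsClosed (upperClosure s : Set X) := by
  have : CompactSpace s := isCompact_iff_compactSpace.mp hs
  have himage : (upperClosure s : Set X) = Prod.snd '' {p : s × X | (p.1 : X) ≤ p.2} := by
    ext x
    simp [mem_upperClosure]
  rw [himage]
  exact isClosedMap_snd_of_compactSpace _
    (isClosed_le (continuous_subtype_val.comp continuous_fst) continuous_snd)

theorem IsCompact.isClosed_lowerClosure {s : Set X} (hs : IsCompact s) :
    IsClosed (lowerClosure s : Set X) :=
  IsCompact.isClosed_upperClosure (X := Xᵒᵈ) hs

end Pospace

namespace Urysohns.CU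

variable {X : Type*} [TopologicalSpace X] [Preorder X]

theorem monotone_approx (c : CU fun (_ u : Set X) => IsLowerSet u) (n : ℕ) :
    Monotone (c.approx n) := by
  induction n generalizing c with
  | zero =>
    intro x y hxy
    by_cases hx : x ∈ c.Uᶜ
    · simp [approx, indicator_of_mem hx, indicator_of_mem (c.P_C_U.compl hxy hx)]
    · simp [approx, indicator_of_notMem hx, indicator_nonneg]
  | succ n ih => exact fun x y hxy => midpoint_le_midpoint (ih c.left hxy) (ih c.right hxy)

theorem monotone_lim (c : CU fun (_ u : Set X) => IsLowerSet u) : Monotone c.lim :=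
  fun _ y hxy => ciSup_mono (c.bddAbove_range_approx y) fun n => c.monotone_approx n hxy

end Urysohns.CU

section CompactPospace

variable {X : Type*} [TopologicalSpace X] [Preorder X] [OrderClosedTopology X] [CompactSpace X]

theorem exists_isOpen_isUpperSet_isLowerSet_of_disjoint {s t : Set X} (hs : IsClosed s)
    (ht : IsClosed t) (hsu : IsUpperSet s) (htl : IsLowerSet t) (hst : Disjoint s t) :
    ∃ u v : Set X, IsOpen u ∧ IsOpen v ∧ IsUpperSet u ∧ IsLowerSet v ∧ s ⊆ u ∧ t ⊆ v ∧
      Disjoint u v := by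
  obtain ⟨u, v, hu, hv, hsu', htv', huv⟩ := generalized_tube_lemma hs.isCompact ht.isCompact
    (isClosed_le continuous_fst continuous_snd).isOpen_compl
    (by rintro ⟨a, b⟩ ⟨ha, hb⟩ (hab : a ≤ b); exact hst.ne_of_mem (hsu hab ha) hb rfl)
  refine ⟨(lowerClosure uᶜ : Set X)ᶜ, (upperClosure vᶜ : Set X)ᶜ,
    hu.isClosed_compl.isCompact.isClosed_lowerClosure.isOpen_compl,
    hv.isClosed_compl.isCompact.isClosed_upperClosure.isOpen_compl,
    (lowerClosure uᶜ).lower.compl, (upperClosure vᶜ).upper.compl, ?_, ?_, ?_⟩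
  · rintro a ha ⟨z, hz, haz⟩
    exact hz (hsu' (hsu haz ha))
  · rintro a ha ⟨z, hz, hza⟩
    exact hz (htv' (htl hza ha))
  · refine disjoint_left.mpr fun x hxu hxv => huv (mk_mem_prod ?_ ?_) (le_refl x)
    · exact compl_subset_comm.mp subset_lowerClosure hxu
    · exact compl_subset_comm.mp subset_upperClosure hxv

theorem exists_isOpen_isLowerSet_closure_subset {s u : Set X} (hs : IsClosed s) (hu : IsOpen u)
    (hul : IsLowerSet u) (hsu : s ⊆ u) :
    ∃ v, IsOpen v ∧ IsLowerSet v ∧ s ⊆ v ∧ closure v ⊆ u := by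
  obtain ⟨w, v, hw, hv, -, hvl, huw, hsv, hwv⟩ :=
    exists_isOpen_isUpperSet_isLowerSet_of_disjoint hu.isClosed_compl
      hs.isCompact.isClosed_lowerClosure hul.compl (lowerClosure s).lower
      (disjoint_left.mpr fun x hxu ⟨a, ha, hxa⟩ => hxu (hul hxa (hsu ha)))
  refine ⟨v, hv, hvl, subset_lowerClosure.trans hsv, ?_⟩
  exact (closure_minimal hwv.subset_compl_left hw.isClosed_compl).trans (compl_subset_comm.mp huw)

theorem exists_monotone_continuous_zero_one_of_isClosed {s t : Set X} (hs : IsClosed s)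
    (ht : IsClosed t) (htu : IsUpperSet t) (hd : Disjoint s t) :
    ∃ f : C(X, ℝ), Monotone f ∧ EqOn f 0 s ∧ EqOn f 1 t ∧ ∀ x, f x ∈ Icc (0 : ℝ) 1 := by
  let c : Urysohns.CU fun (_ u : Set X) => IsLowerSet u :=
    { C := s
      U := tᶜ
      P_C_U := htu.compl
      closed_C := hs
      open_U := ht.isOpen_compl
      subset := disjoint_left.mp hd
      hP := fun hc hul hu hcu => by
        obtain ⟨v, hv, hvl, hcv, hvu⟩ := exists_isOpen_isLowerSet_closure_subset hc hu hul hcu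
        exact ⟨v, hv, hcv, hvu, hvl, hul⟩ }
  exact ⟨⟨c.lim, c.continuous_lim⟩, c.monotone_lim, c.lim_of_mem_C,
    fun x hx => c.lim_of_notMem_U _ fun h => h hx, c.lim_mem_Icc⟩

theorem exists_monotone_continuous_zero_one_of_lt {Y : Set X} (hY : IsClosed Y) {f : Y → ℝ}
    (hfc : Continuous f) (hfm : Monotone f) {a b : ℝ} (hab : a < b) :
    ∃ g : C(X, ℝ), Monotone g ∧ (∀ y : Y, f y ≤ a → g y = 0) ∧ (∀ y : Y, b ≤ f y → g y = 1) ∧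
      ∀ x, g x ∈ Icc (0 : ℝ) 1 := by
  have hclosed {p : ℝ → Prop} (hp : IsClosed {r | p r}) :
      IsClosed (((↑) : Y → X) '' {y | p (f y)}) :=
    hY.isClosedEmbedding_subtypeVal.isClosedMap _ (hp.preimage hfc)
  obtain ⟨g, hgm, hg0, hg1, hg01⟩ := exists_monotone_continuous_zero_one_of_isClosed
    (hclosed isClosed_Iic) (hclosed isClosed_Ici).isCompact.isClosed_upperClosure
    (upperClosure _).upper <| by
      refine disjoint_left.mpr ?_
      rintro _ ⟨y₁, hy₁ : f y₁ ≤ a, rfl⟩ ⟨_, ⟨y₂, hy₂ : b ≤ f y₂, rfl⟩, hy₂₁⟩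
      exact hab.not_ge ((hy₂.trans (hfm hy₂₁)).trans hy₁)
  exact ⟨g, hgm, fun y hy => hg0 ⟨y, hy, rfl⟩,
    fun y hy => hg1 (subset_upperClosure ⟨y, hy, rfl⟩), hg01⟩

theorem exists_monotone_continuous_near {Y : Set X} (hY : IsClosed Y) {f : Y → ℝ}
    (hfc : Continuous f) (hfm : Monotone f) (hf : ∀ y, f y ∈ Icc (0 : ℝ) 1) {ε : ℝ}
    (hε : 0 < ε) : ∃ H : C(X, ℝ), Monotone H ∧ ∀ y : Y, |H y - f y| ≤ ε := by
  obtain ⟨n, hn⟩ := exists_nat_one_div_lt hε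
  have hk : (0 : ℝ) < (n + 1 : ℕ) := by positivity
  choose g hgm hg0 hg1 hg01 using fun i : ℕ =>
    exists_monotone_continuous_zero_one_of_lt hY hfc hfm
      (a := i / (n + 1 : ℕ)) (b := (i + 1) / (n + 1 : ℕ)) (by gcongr; linarith)
  refine ⟨⟨fun x => (∑ i ∈ Finset.range (n + 1), g i x) / (n + 1 : ℕ), by fun_prop⟩,
    fun x x' hxx' => ?_, fun y => ?_⟩
  · exact div_le_div_of_nonneg_right (Finset.sum_le_sum fun i _ => hgm i hxx') hk.le
  · have hsum := abs_sum_range_sub_le_one (v := fun i => g i y) (t := (n + 1 : ℕ) * f y)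
      (fun i => hg01 i y) (fun i hi => hg1 i y (by rw [div_le_iff₀ hk]; linarith))
      (fun i hi => hg0 i y (by rw [le_div_iff₀ hk]; linarith))
      (mul_nonneg hk.le (hf y).1) (mul_le_of_le_one_right hk.le (hf y).2)
    calc |(∑ i ∈ Finset.range (n + 1), g i y) / (n + 1 : ℕ) - f y|
        = |(∑ i ∈ Finset.range (n + 1), g i y - (n + 1 : ℕ) * f y) / (n + 1 : ℕ)| := by
          rw [sub_div, mul_div_cancel_left₀ _ hk.ne']
      _ ≤ 1 / (n + 1 : ℕ) := by
          rw [abs_div, abs_of_pos hk]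
          gcongr
      _ ≤ ε := by exact_mod_cast hn.le

theorem exists_monotone_continuous_refine {Y : Set X} (hY : IsClosed Y) {f : Y → ℝ}
    (hfc : Continuous f) (hfm : Monotone f) (hf : ∀ y, f y ∈ Icc (0 : ℝ) 1) {G : C(X, ℝ)}
    (hGm : Monotone G) {δ : ℝ} (hδ : 0 < δ) (hG : ∀ y : Y, |G y - f y| ≤ δ) :
    ∃ G' : C(X, ℝ), Monotone G' ∧ (∀ y : Y, |G' y - f y| ≤ δ / 2) ∧ dist G' G ≤ 2 * δ := by
  obtain ⟨H, hHm, hH⟩ := exists_monotone_continuous_near hY hfc hfm hf (half_pos hδ)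
  let G' : C(X, ℝ) := ⟨fun x => max (G x - 2 * δ) (min (H x) (G x + 2 * δ)), by fun_prop⟩
  have hG'Y (y : Y) : G' y = H y := by
    obtain ⟨hH₁, hH₂⟩ := abs_le.mp (hH y)
    obtain ⟨hG₁, hG₂⟩ := abs_le.mp (hG y)
    change max _ (min _ _) = _
    rw [min_eq_left (by linarith), max_eq_right (by linarith)]
  refine ⟨G', ?_, fun y => hG'Y y ▸ hH y, (ContinuousMap.dist_le (by positivity)).mpr fun x => ?_⟩
  · exact Monotone.max (fun a b h => sub_le_sub_right (hGm h) _)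
      (hHm.min (hGm.add_const _))
  · have hlow := le_max_left (G x - 2 * δ) (min (H x) (G x + 2 * δ))
    have hupp : max (G x - 2 * δ) (min (H x) (G x + 2 * δ)) ≤ G x + 2 * δ :=
      max_le (by linarith) (min_le_right _ _)
    simp only [G', ContinuousMap.coe_mk, Real.dist_eq, abs_le]
    constructor <;> linarith

theorem exists_monotone_continuous_extension {Y : Set X} (hY : IsClosed Y) {f : Y → ℝ}
    (hfc : Continuous f) (hfm : Monotone f) (hf : ∀ y, f y ∈ Icc (0 : ℝ) 1) :
    ∃ F : C(X, ℝ), Monotone F ∧ ∀ y : Y, F y = f y := by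
  let A (n : ℕ) : Set C(X, ℝ) := {G | Monotone G ∧ ∀ y : Y, |G y - f y| ≤ (1 / 2) ^ n}
  have step (n : ℕ) (G : C(X, ℝ)) (hG : G ∈ A n) :
      ∃ G' ∈ A (n + 1), dist G' G ≤ 2 * (1 / 2) ^ n := by
    obtain ⟨G', hG'm, hG', hdist⟩ :=
      exists_monotone_continuous_refine hY hfc hfm hf hG.1 (by positivity) hG.2
    exact ⟨G', ⟨hG'm, fun y => (hG' y).trans_eq (by ring)⟩, hdist⟩
  choose! next hnext_mem hnext_dist using step
  let u (n : ℕ) : C(X, ℝ) := Nat.rec 0 next n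
  have hu (n : ℕ) : u n ∈ A n := by
    induction n with
    | zero =>
      refine ⟨monotone_const, fun y => ?_⟩
      simpa [u, abs_of_nonneg (hf y).1] using (hf y).2
    | succ n ih => exact hnext_mem n (u n) ih
  obtain ⟨F, hF⟩ := cauchySeq_tendsto_of_complete <| cauchySeq_of_le_geometric (f := u) (1 / 2) 2
    (by norm_num) fun n => (dist_comm _ _).trans_le (hnext_dist n (u n) (hu n))
  have hFx (x : X) : Tendsto (fun n => u n x) atTop (𝓝 (F x)) :=
    ((continuous_eval_const x).tendsto F).comp hF
  refine ⟨F, fun x x' hxx' => le_of_tendsto_of_tendsto' (hFx x) (hFx x') fun n => (hu n).1 hxx',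
    fun y => tendsto_nhds_unique (hFx y) ?_⟩
  exact tendsto_iff_dist_tendsto_zero.mpr <| squeeze_zero (fun _ => dist_nonneg)
    (fun n => (hu n).2 y) (tendsto_pow_atTop_nhds_zero_of_lt_one (by norm_num) (by norm_num))

end CompactPospace

/-- Nachbin's extension theorem: every continuous monotone `[0,1]`-valued function on a
closed subspace of a compact ordered space extends to a continuous monotone function
on the whole space. -/
theorem nachbin_extension {X : Type*} [TopologicalSpace X] [CompactSpace X]
    [PartialOrder X] [OrderClosedTopology X] {Y : Set X} (hY : IsClosed Y)
    {f : Y → unitInterval} (hfc : Continuous f) (hfm : Monotone f) :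
    ∃ F : X → unitInterval, Continuous F ∧ Monotone F ∧ ∀ z : Y, F z = f z := by
  obtain ⟨F, hFm, hFY⟩ := exists_monotone_continuous_extension hY
    (continuous_subtype_val.comp hfc) (fun _ _ h => hfm h) fun y => (f y).2
  refine ⟨fun x => projIcc 0 1 zero_le_one (F x), continuous_projIcc.comp F.continuous,
    fun _ _ h => monotone_projIcc zero_le_one (hFm h), fun z => ?_⟩
  simp only [hFY z, Function.comp_apply, projIcc_val]
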